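/- arXiv:1910.14118 — 6 statements merged into one kernel-verified Lean document; each statement's English description precedes it below -/
import Mathlib

section
/- Let (μ₁, μ₂, μ₃) and (μ₁', μ₂', μ₃') be admissible triples of real numbers. If A = A', B = B', C = C' and D = D' (where A, B, C, D are formed from (μ₁, μ₂, μ₃) and A', B', C', D' from (μ₁', μ₂', μ₃')), then the multisets {μ₁, μ₂, μ₃} and {μ₁', μ₂', μ₃'} are equal. (This is the algebraic core of the theorem that two locally homogeneous elliptic three-manifolds whose fundamental groups have the same order and whose first four heat invariants agree are locally isometric.) -/
/-!
Write `s = P₁`, `p = P₂`, `q = P₃`. Since `A = p` is shared, the triples have the same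
`p`, and `B = s p - q`, `C = s q` then leave two possibilities. Either `s = s'`, so that
all elementary symmetric polynomials agree and the triples are the roots of the same
cubic; or `s ≠ s'`, which forces `q = -s' p`, `q' = -s p`, and then `D = D'` forces
`p = s s'` (as `B = (s + s') p` is positive). In the second case the discriminants of the
two cubics are `s² s'² (s + s') (5 s - 27 s')` and `s² s'² (s + s') (5 s' - 27 s)`, which
cannot both be nonnegative when `s, s' > 0`, whereas a cubic with three real roots has
nonnegative discriminant.
-/

/-- Elementary symmetric polynomials in three real variables. -/
noncomputable def P1 (x y z : ℝ) : ℝ := x + y + z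
noncomputable def P2 (x y z : ℝ) : ℝ := x * y + x * z + y * z
noncomputable def P3 (x y z : ℝ) : ℝ := x * y * z

/-- The quantities A, B, C, D determined by the order of the fundamental group
and the first four heat invariants. -/
noncomputable def qA (x y z : ℝ) : ℝ := P2 x y z
noncomputable def qB (x y z : ℝ) : ℝ := P1 x y z * P2 x y z - P3 x y z
noncomputable def qC (x y z : ℝ) : ℝ := P1 x y z * P3 x y z
noncomputable def qD (x y z : ℝ) : ℝ :=
  -240 * (P3 x y z) ^ 2 - 576 * P1 x y z * P2 x y z * P3 x y z
    + 184 * (P2 x y z) ^ 3 + 192 * (P1 x y z) ^ 3 * P3 x y z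
    - 48 * (P1 x y z) ^ 2 * (P2 x y z) ^ 2

open Polynomial

def symD (s p q : ℝ) : ℝ :=
  -240 * q ^ 2 - 576 * s * p * q + 184 * p ^ 3 + 192 * s ^ 3 * q - 48 * s ^ 2 * p ^ 2

/-- The discriminant of `X³ - s X² + p X - q`. -/
def cubicDiscr (s p q : ℝ) : ℝ :=
  s ^ 2 * p ^ 2 - 4 * p ^ 3 - 4 * s ^ 3 * q + 18 * s * p * q - 27 * q ^ 2

lemma qD_eq_symD (x y z : ℝ) : qD x y z = symD (P1 x y z) (P2 x y z) (P3 x y z) := rfl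

lemma qB_eq_mul (x y z : ℝ) : qB x y z = (x + y) * (x + z) * (y + z) := by
  unfold qB P1 P2 P3
  ring

lemma cubicDiscr_eq_sq (x y z : ℝ) :
    cubicDiscr (P1 x y z) (P2 x y z) (P3 x y z) = ((x - y) * (x - z) * (y - z)) ^ 2 := by
  unfold cubicDiscr P1 P2 P3
  ring

lemma cubicDiscr_nonneg (x y z : ℝ) : 0 ≤ cubicDiscr (P1 x y z) (P2 x y z) (P3 x y z) := by
  rw [cubicDiscr_eq_sq]
  exact sq_nonneg _

lemma multiset_eq_roots {R : Type*} [CommRing R] [IsDomain R] (x y z : R) :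
    ({x, y, z} : Multiset R) = ((X - C x) * (X - C y) * (X - C z)).roots := by
  rw [← roots_multiset_prod_X_sub_C {x, y, z}]
  simp [mul_assoc]

lemma multiset_eq_of_esymm_eq {R : Type*} [CommRing R] [IsDomain R] {x y z x' y' z' : R}
    (h₁ : x + y + z = x' + y' + z')
    (h₂ : x * y + x * z + y * z = x' * y' + x' * z' + y' * z')
    (h₃ : x * y * z = x' * y' * z') :
    ({x, y, z} : Multiset R) = {x', y', z'} := by
  have cubic : ∀ a b c : R, (X - C a) * (X - C b) * (X - C c)
      = X ^ 3 - C (a + b + c) * X ^ 2 + C (a * b + a * c + b * c) * X - C (a * b * c) := by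
    intro a b c
    simp only [map_add, map_mul]
    ring
  rw [multiset_eq_roots, multiset_eq_roots, cubic, cubic, h₁, h₂, h₃]

lemma cubicDiscr_of_eq_mul {s s' p : ℝ} (hp : p = s * s') :
    cubicDiscr s p (-(s' * p)) = s ^ 2 * s' ^ 2 * (s + s') * (5 * s - 27 * s') := by
  subst hp
  unfold cubicDiscr
  ring

lemma eq_of_invariants_eq {s s' p q q' : ℝ} (hs : 0 < s) (hs' : 0 < s')
    (hB_pos : 0 < s * p - q) (hB : s * p - q = s' * p - q')
    (hC : s * q = s' * q') (hD : symD s p q = symD s' p q')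
    (hΔ : 0 ≤ cubicDiscr s p q) (hΔ' : 0 ≤ cubicDiscr s' p q') :
    s = s' := by
  by_contra hne
  have hsub : s - s' ≠ 0 := sub_ne_zero.mpr hne
  have hq : q = -(s' * p) := by
    have : (s - s') * (q + s' * p) = 0 := by linear_combination hC + s' * hB
    linear_combination (mul_eq_zero.mp this).resolve_left hsub
  have hq' : q' = -(s * p) := by
    have : (s - s') * (q' + s * p) = 0 := by linear_combination hC + s * hB
    linear_combination (mul_eq_zero.mp this).resolve_left hsub
  subst hq hq'
  have hp_pos : 0 < p := pos_of_mul_pos_right (a := s + s') (by linarith) (by linarith)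
  have hp : p = s * s' := by
    have h : 192 * p * (s + s') * (s - s') * (p - s * s') = 0 := by
      unfold symD at hD
      linear_combination hD
    linear_combination (mul_eq_zero.mp h).resolve_left (mul_ne_zero (by positivity) hsub)
  rw [cubicDiscr_of_eq_mul hp] at hΔ
  rw [cubicDiscr_of_eq_mul (hp.trans (mul_comm s s'))] at hΔ'
  have h₁ := nonneg_of_mul_nonneg_right hΔ (by positivity)
  have h₂ := nonneg_of_mul_nonneg_right hΔ' (by positivity)
  linarith

/-- admissible triples with the same A, B, C, D determine the same
3-multiset of Christoffel symbols. -/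
theorem stmt_0 (μ₁ μ₂ μ₃ ν₁ ν₂ ν₃ : ℝ)
    (h₁ : μ₁ + μ₂ > 0) (h₂ : μ₁ + μ₃ > 0) (h₃ : μ₂ + μ₃ > 0)
    (h₁' : ν₁ + ν₂ > 0) (h₂' : ν₁ + ν₃ > 0) (h₃' : ν₂ + ν₃ > 0)
    (hA : qA μ₁ μ₂ μ₃ = qA ν₁ ν₂ ν₃)
    (hB : qB μ₁ μ₂ μ₃ = qB ν₁ ν₂ ν₃)
    (hC : qC μ₁ μ₂ μ₃ = qC ν₁ ν₂ ν₃)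
    (hD : qD μ₁ μ₂ μ₃ = qD ν₁ ν₂ ν₃) :
    ({μ₁, μ₂, μ₃} : Multiset ℝ) = {ν₁, ν₂, ν₃} := by
  have hA' : P2 μ₁ μ₂ μ₃ = P2 ν₁ ν₂ ν₃ := hA
  have hs : 0 < P1 μ₁ μ₂ μ₃ := by unfold P1; linarith
  have hs' : 0 < P1 ν₁ ν₂ ν₃ := by unfold P1; linarith
  have hB_pos : 0 < qB μ₁ μ₂ μ₃ := by rw [qB_eq_mul]; positivity
  have hΔ' := cubicDiscr_nonneg ν₁ ν₂ ν₃
  rw [qB, qB, ← hA'] at hB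
  rw [qD_eq_symD, qD_eq_symD, ← hA'] at hD
  rw [← hA'] at hΔ'
  have hP1 : P1 μ₁ μ₂ μ₃ = P1 ν₁ ν₂ ν₃ :=
    eq_of_invariants_eq hs hs' hB_pos hB hC hD (cubicDiscr_nonneg μ₁ μ₂ μ₃) hΔ'
  have hP3 : P3 μ₁ μ₂ μ₃ = P3 ν₁ ν₂ ν₃ := by linear_combination -hB + P2 μ₁ μ₂ μ₃ * hP1
  exact multiset_eq_of_esymm_eq hP1 hA' hP3
end

section
/- Let (μ₁, μ₂, μ₃) and (μ₁', μ₂', μ₃') be admissible triples of real numbers with A = A', B = B' and C = C'. If additionally A ≤ 0 or C ≥ 0, then the multisets {μ₁, μ₂, μ₃} and {μ₁', μ₂', μ₃'} are equal (i.e., in this case the quantity D is not needed). -/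
/-!
Write `s = P₁`, `A = P₂`, `q = P₃`. Equal `A` and `B = sA - q` give `q - q' = (s - s')A`, and
then equal `C = sq` forces `s = s'` or `q = -A s'`. In the second case `C = -A s s'` with
`s, s' > 0`, so `A ≤ 0` under either sign hypothesis, while admissibility with `A ≤ 0` forces
`C < 0`: a contradiction. Hence all three elementary symmetric polynomials agree, and the
triples are the root multisets of the same monic cubic.
-/

open Polynomial

def Admissible (x y z : ℝ) : Prop := 0 < x + y ∧ 0 < x + z ∧ 0 < y + z

namespace Admissible

variable {x y z : ℝ}

lemma P1_pos (h : Admissible x y z) : 0 < P1 x y z := by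
  obtain ⟨hxy, hxz, hyz⟩ := h
  unfold P1
  linarith

lemma qC_neg_of_qA_nonpos (h : Admissible x y z) (hA : qA x y z ≤ 0) : qC x y z < 0 := by
  obtain ⟨hxy, hxz, hyz⟩ := h
  unfold qA qC P1 P2 P3 at *
  nlinarith [mul_pos hxy hxz, mul_pos hxy hyz, mul_pos hxz hyz, mul_pos (mul_pos hxy hxz) hyz,
    sq_nonneg (x + y + z), sq_nonneg (x - y), sq_nonneg (x - z), sq_nonneg (y - z),
    sq_nonneg x, sq_nonneg y, sq_nonneg z]

end Admissible

lemma multiset_prod_X_sub_C_triple (x y z : ℝ) :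
    (({x, y, z} : Multiset ℝ).map fun a => X - C a).prod
      = X ^ 3 - C (P1 x y z) * X ^ 2 + C (P2 x y z) * X - C (P3 x y z) := by
  simp only [Multiset.insert_eq_cons, Multiset.map_cons, Multiset.map_singleton,
    Multiset.prod_cons, Multiset.prod_singleton, P1, P2, P3, C_add, C_mul]
  ring

lemma multiset_eq_of_P1_P2_P3_eq {x y z x' y' z' : ℝ} (h₁ : P1 x y z = P1 x' y' z')
    (h₂ : P2 x y z = P2 x' y' z') (h₃ : P3 x y z = P3 x' y' z') :
    ({x, y, z} : Multiset ℝ) = {x', y', z'} := by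
  rw [← roots_multiset_prod_X_sub_C {x, y, z}, ← roots_multiset_prod_X_sub_C {x', y', z'},
    multiset_prod_X_sub_C_triple, multiset_prod_X_sub_C_triple, h₁, h₂, h₃]

lemma qC_eq_of_P1_ne {x y z x' y' z' : ℝ} (hA : qA x y z = qA x' y' z')
    (hB : qB x y z = qB x' y' z') (hC : qC x y z = qC x' y' z')
    (hne : P1 x y z ≠ P1 x' y' z') :
    qC x y z = -qA x y z * (P1 x y z * P1 x' y' z') := by
  unfold qA qB qC at *
  have hq : P3 x y z = -P2 x y z * P1 x' y' z' := by
    apply mul_left_cancel₀ (sub_ne_zero.mpr hne)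
    linear_combination hC + P1 x' y' z' * hB - P1 x' y' z' ^ 2 * hA
  rw [hq]
  ring

/-- admissible triples with the same A, B, C, where additionally
A ≤ 0 or C ≥ 0, determine the same 3-multiset of Christoffel symbols. -/
theorem stmt_1 (μ₁ μ₂ μ₃ ν₁ ν₂ ν₃ : ℝ)
    (h₁ : μ₁ + μ₂ > 0) (h₂ : μ₁ + μ₃ > 0) (h₃ : μ₂ + μ₃ > 0)
    (h₁' : ν₁ + ν₂ > 0) (h₂' : ν₁ + ν₃ > 0) (h₃' : ν₂ + ν₃ > 0)
    (hA : qA μ₁ μ₂ μ₃ = qA ν₁ ν₂ ν₃)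
    (hB : qB μ₁ μ₂ μ₃ = qB ν₁ ν₂ ν₃)
    (hC : qC μ₁ μ₂ μ₃ = qC ν₁ ν₂ ν₃)
    (hsign : qA μ₁ μ₂ μ₃ ≤ 0 ∨ qC μ₁ μ₂ μ₃ ≥ 0) :
    ({μ₁, μ₂, μ₃} : Multiset ℝ) = {ν₁, ν₂, ν₃} := by
  have hμ : Admissible μ₁ μ₂ μ₃ := ⟨h₁, h₂, h₃⟩
  have hν : Admissible ν₁ ν₂ ν₃ := ⟨h₁', h₂', h₃'⟩
  have hP1 : P1 μ₁ μ₂ μ₃ = P1 ν₁ ν₂ ν₃ := by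
    by_contra hne
    have hCA := qC_eq_of_P1_ne hA hB hC hne
    have hss := mul_pos hμ.P1_pos hν.P1_pos
    have hAnonpos : qA μ₁ μ₂ μ₃ ≤ 0 := hsign.elim id fun hCnonneg => by nlinarith
    have hCneg := hμ.qC_neg_of_qA_nonpos hAnonpos
    nlinarith
  have hP3 : P3 μ₁ μ₂ μ₃ = P3 ν₁ ν₂ ν₃ := by
    have hP2 : P2 μ₁ μ₂ μ₃ = P2 ν₁ ν₂ ν₃ := hA
    unfold qB at hB
    rw [hP1, hP2] at hB
    linarith
  exact multiset_eq_of_P1_P2_P3_eq hP1 hA hP3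
end

section
/- Let (μ₁, μ₂, μ₃) and (μ₁', μ₂', μ₃') be admissible triples of real numbers. If A = A', B = B', C = C' and D = D', then P₁(μ₁, μ₂, μ₃) = P₁(μ₁', μ₂', μ₃'); that is, the quantities A, B, C, D determine P₁. -/
/-!
Write `s, t` for the two values of `P₁`, `a` for the common value of `P₂`, and `b, b'` for the
two values of `P₃`. If `s ≠ t`, the equations for `B` and `C` force `b = -t a` and `b' = -s a`,
and then, since `B = a (s + t) ≠ 0`, the equation for `D` forces `a = s t`. But the cubics
`X³ - s X² + a X - b` and `X³ - t X² + a X - b'` have real roots, so their discriminants are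
nonnegative, whereas for these coefficients the discriminants add up to `-22 B² < 0`.
-/

lemma P1_mul_P2_sub_P3 (x y z : ℝ) :
    P1 x y z * P2 x y z - P3 x y z = (x + y) * (x + z) * (y + z) := by
  unfold P1 P2 P3
  ring

lemma discr_P_eq_sq (x y z : ℝ) :
    (⟨1, -P1 x y z, P2 x y z, -P3 x y z⟩ : Cubic ℝ).discr = ((x - y) * (x - z) * (y - z)) ^ 2 := by
  simp only [Cubic.discr, P1, P2, P3]
  ring

theorem eq_of_discr_nonneg_of_B_C_D_eq {s t a b b' : ℝ} (hB₀ : s * a - b ≠ 0)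
    (hB : s * a - b = t * a - b') (hC : s * b = t * b')
    (hD : -240 * b ^ 2 - 576 * s * a * b + 192 * s ^ 3 * b - 48 * s ^ 2 * a ^ 2
        = -240 * b' ^ 2 - 576 * t * a * b' + 192 * t ^ 3 * b' - 48 * t ^ 2 * a ^ 2)
    (hs : 0 ≤ (⟨1, -s, a, -b⟩ : Cubic ℝ).discr) (ht : 0 ≤ (⟨1, -t, a, -b'⟩ : Cubic ℝ).discr) :
    s = t := by
  by_contra hst
  have hst : s - t ≠ 0 := sub_ne_zero.mpr hst
  have hb : b = -(t * a) := by
    have : (s - t) * (b + t * a) = 0 := by linear_combination hC + t * hB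
    linear_combination (mul_eq_zero.mp this).resolve_left hst
  have hb' : b' = -(s * a) := by linear_combination hB + hb
  subst hb hb'
  have ha : a = s * t := by
    have : (192 * (s * a - -(t * a)) * (s - t)) * (a - s * t) = 0 := by linear_combination hD
    linear_combination (mul_eq_zero.mp this).resolve_left (mul_ne_zero (mul_ne_zero (by norm_num) hB₀) hst)
  subst ha
  have hsum : (⟨1, -s, s * t, -(-(t * (s * t)))⟩ : Cubic ℝ).discr
      + (⟨1, -t, s * t, -(-(s * (s * t)))⟩ : Cubic ℝ).discr
      = -22 * (s * (s * t) - -(t * (s * t))) ^ 2 := by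
    simp only [Cubic.discr]
    ring
  linarith [sq_pos_of_ne_zero hB₀]

theorem stmt_2_general (μ₁ μ₂ μ₃ ν₁ ν₂ ν₃ : ℝ)
    (h₁ : μ₁ + μ₂ > 0) (h₂ : μ₁ + μ₃ > 0) (h₃ : μ₂ + μ₃ > 0)
    (hA : qA μ₁ μ₂ μ₃ = qA ν₁ ν₂ ν₃)
    (hB : qB μ₁ μ₂ μ₃ = qB ν₁ ν₂ ν₃)
    (hC : qC μ₁ μ₂ μ₃ = qC ν₁ ν₂ ν₃)
    (hD : qD μ₁ μ₂ μ₃ = qD ν₁ ν₂ ν₃) :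
    P1 μ₁ μ₂ μ₃ = P1 ν₁ ν₂ ν₃ := by
  have hP2 : P2 ν₁ ν₂ ν₃ = P2 μ₁ μ₂ μ₃ := hA.symm
  unfold qB at hB
  unfold qD at hD
  rw [hP2] at hB hD
  refine eq_of_discr_nonneg_of_B_C_D_eq ?_ hB hC (by linarith) ?_ ?_
  · rw [P1_mul_P2_sub_P3]
    exact (mul_pos (mul_pos h₁ h₂) h₃).ne'
  · rw [discr_P_eq_sq]
    positivity
  · rw [← hP2, discr_P_eq_sq]
    positivity

/-- for admissible triples, the quantities A, B, C, D determine P₁. -/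
theorem stmt_2 (μ₁ μ₂ μ₃ ν₁ ν₂ ν₃ : ℝ)
    (h₁ : μ₁ + μ₂ > 0) (h₂ : μ₁ + μ₃ > 0) (h₃ : μ₂ + μ₃ > 0)
    (h₁' : ν₁ + ν₂ > 0) (h₂' : ν₁ + ν₃ > 0) (h₃' : ν₂ + ν₃ > 0)
    (hA : qA μ₁ μ₂ μ₃ = qA ν₁ ν₂ ν₃)
    (hB : qB μ₁ μ₂ μ₃ = qB ν₁ ν₂ ν₃)
    (hC : qC μ₁ μ₂ μ₃ = qC ν₁ ν₂ ν₃)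
    (hD : qD μ₁ μ₂ μ₃ = qD ν₁ ν₂ ν₃) :
    P1 μ₁ μ₂ μ₃ = P1 ν₁ ν₂ ν₃ :=
  stmt_2_general μ₁ μ₂ μ₃ ν₁ ν₂ ν₃ h₁ h₂ h₃ hA hB hC hD
end

section
/- Let (μ₁, μ₂, μ₃) be an admissible triple of real numbers and a₀ > 0, and define a₁ = (a₀/3)·P₂ and a₂ = (a₀/360)·(36P₂² − 48P₁P₃). Then 27a₁² − 30a₀a₂ = 0 if and only if P₃ = 0 (i.e., if and only if at least one of μ₁, μ₂, μ₃ is zero, which is equivalent to the metric having degenerate Ricci tensor). -/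
/-! The `P₂²` terms cancel, so the combination `27a₁² − 30a₀a₂` is `4a₀²P₁P₃`; admissibility makes
`P₁` positive, hence this vanishes exactly when `P₃` does. -/

lemma P1_pos_of_pairwise_add_pos {x y z : ℝ} (hxy : 0 < x + y) (hxz : 0 < x + z)
    (hyz : 0 < y + z) : 0 < P1 x y z := by
  unfold P1
  linarith

lemma heat_invariant_combination_eq (x y z a₀ : ℝ) :
    27 * ((a₀ / 3) * P2 x y z) ^ 2
        - 30 * a₀ * ((a₀ / 360) * (36 * P2 x y z ^ 2 - 48 * P1 x y z * P3 x y z))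
      = 4 * a₀ ^ 2 * P1 x y z * P3 x y z := by
  ring

/-- for an admissible triple, 27a₁² − 30a₀a₂ = 0 if and only if
P₃ = 0 (i.e. the metric has degenerate Ricci tensor). -/
theorem stmt_8 (μ₁ μ₂ μ₃ a₀ a₁ a₂ : ℝ)
    (h₁ : μ₁ + μ₂ > 0) (h₂ : μ₁ + μ₃ > 0) (h₃ : μ₂ + μ₃ > 0)
    (ha₀ : a₀ > 0)
    (ha₁ : a₁ = (a₀ / 3) * P2 μ₁ μ₂ μ₃)
    (ha₂ : a₂ = (a₀ / 360) * (36 * (P2 μ₁ μ₂ μ₃) ^ 2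
      - 48 * P1 μ₁ μ₂ μ₃ * P3 μ₁ μ₂ μ₃)) :
    27 * a₁ ^ 2 - 30 * a₀ * a₂ = 0 ↔ P3 μ₁ μ₂ μ₃ = 0 := by
  have hP1 : 0 < P1 μ₁ μ₂ μ₃ := P1_pos_of_pairwise_add_pos h₁ h₂ h₃
  have hcoeff : 4 * a₀ ^ 2 * P1 μ₁ μ₂ μ₃ ≠ 0 := by positivity
  rw [ha₁, ha₂, heat_invariant_combination_eq, mul_eq_zero, or_iff_right hcoeff]
end

section
/- Let x, y, z be real numbers with P₁ ≠ 0, P₂ > 0 and P₁·P₃ = −P₂². Then P₁² ≥ (27/5)·P₂. -/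
/-! The cubic with roots `x, y, z` has discriminant `((x - y) * (x - z) * (y - z)) ^ 2 ≥ 0`.
Writing it in the elementary symmetric polynomials `p, q, r` and eliminating `r` through
`p * r = -q ^ 2` turns `p ^ 2 * discr` into `q ^ 2 * (p ^ 2 + q) * (5 * p ^ 2 - 27 * q)`;
for `q > 0` the first two factors are positive, so the last one is nonnegative. -/

namespace Cubic

theorem discr_of_roots {R : Type*} [CommRing R] (x y z : R) :
    (⟨1, -(x + y + z), x * y + x * z + y * z, -(x * y * z)⟩ : Cubic R).discr
      = ((x - y) * (x - z) * (y - z)) ^ 2 := by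
  simp only [discr]
  ring

theorem sq_mul_discr_of_mul_eq_neg_sq {R : Type*} [CommRing R] {p q r : R}
    (h : p * r = -q ^ 2) :
    p ^ 2 * (⟨1, -p, q, -r⟩ : Cubic R).discr = q ^ 2 * (p ^ 2 + q) * (5 * p ^ 2 - 27 * q) := by
  simp only [discr]
  linear_combination ((18 * p * q - 4 * p ^ 3 - 27 * r) * p + 27 * q ^ 2) * h

end Cubic

theorem stmt_10_general (x y z : ℝ)
    (h₂ : x * y + x * z + y * z > 0)
    (h₃ : (x + y + z) * (x * y * z) = -(x * y + x * z + y * z) ^ 2) :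
    (x + y + z) ^ 2 ≥ (27 / 5) * (x * y + x * z + y * z) := by
  set p := x + y + z
  set q := x * y + x * z + y * z
  have hdiscr : 0 ≤ q ^ 2 * (p ^ 2 + q) * (5 * p ^ 2 - 27 * q) := by
    rw [← Cubic.sq_mul_discr_of_mul_eq_neg_sq h₃, Cubic.discr_of_roots]
    positivity
  have hfactor : 0 ≤ 5 * p ^ 2 - 27 * q :=
    nonneg_of_mul_nonneg_right hdiscr (by positivity)
  linarith

/-- if P₁ ≠ 0, P₂ > 0 and P₁P₃ = −P₂², then P₁² ≥ (27/5)P₂,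
where P₁, P₂, P₃ are the elementary symmetric polynomials in x, y, z. -/
theorem stmt_10 (x y z : ℝ)
    (h₁ : x + y + z ≠ 0)
    (h₂ : x * y + x * z + y * z > 0)
    (h₃ : (x + y + z) * (x * y * z) = -(x * y + x * z + y * z) ^ 2) :
    (x + y + z) ^ 2 ≥ (27 / 5) * (x * y + x * z + y * z) :=
  stmt_10_general x y z h₂ h₃
end

section
/- Let n and n' be positive integers and let μ₂, μ₃, μ₂', μ₃' be positive real numbers. Write P₁ = μ₂ + μ₃, P₂ = μ₂μ₃, and define a₀ = 16π²/(n·P₁·P₂), a₁ = (a₀/3)·P₂, a₂ = (a₀/10)·P₂², a₃ = (a₀/5040)·(184P₂³ − 48P₁²P₂²), and analogously a₀', a₁', a₂', a₃' from n', μ₂', μ₃'. If aⱼ = aⱼ' for j = 0, 1, 2, 3, then n = n' and the multisets {μ₂, μ₃} and {μ₂', μ₃'} are equal. (This is the algebraic core of the lemma that isospectral locally homogeneous elliptic three-manifolds with degenerate Ricci tensor are locally isometric and have fundamental groups of the same order.) -/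
open Real

/-!
With `P₁ = μ₂ + μ₃` and `P₂ = μ₂ μ₃`, the invariant `a₀` is nonzero, so the ratio
`a₁ / a₀ = P₂ / 3` recovers `P₂`, the ratio `a₃ / a₀` then recovers `P₁²` and hence `P₁ > 0`,
and finally `a₀` recovers `n`. Since `μ₂, μ₃` are the roots of `X² - P₁ X + P₂`, the multiset
`{μ₂, μ₃}` is determined.
-/

theorem Multiset.pair_eq_pair_of_add_eq_of_mul_eq {R : Type*} [CommRing R] [NoZeroDivisors R]
    {a b c d : R} (hs : a + b = c + d) (hp : a * b = c * d) : ({a, b} : Multiset R) = {c, d} := by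
  have hroot : (a - c) * (a - d) = 0 := by linear_combination a * hs - hp
  rcases mul_eq_zero.mp hroot with hc | hd
  · obtain rfl : a = c := sub_eq_zero.mp hc
    obtain rfl : b = d := add_left_cancel hs
    rfl
  · obtain rfl : a = d := sub_eq_zero.mp hd
    obtain rfl : b = c := by linear_combination hs
    exact Multiset.pair_comm _ _

theorem stmt_13_general (n n' : ℕ) (hn : 0 < n)
    (μ₂ μ₃ ν₂ ν₃ : ℝ)
    (hμ₂ : 0 < μ₂) (hμ₃ : 0 < μ₃) (hν₂ : 0 < ν₂) (hν₃ : 0 < ν₃)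
    (a₀ a₁ a₃ b₀ b₁ b₃ : ℝ)
    (ha₀ : a₀ = 16 * π ^ 2 / ((n : ℝ) * (μ₂ + μ₃) * (μ₂ * μ₃)))
    (ha₁ : a₁ = (a₀ / 3) * (μ₂ * μ₃))
    (ha₃ : a₃ = (a₀ / 5040) * (184 * (μ₂ * μ₃) ^ 3
      - 48 * (μ₂ + μ₃) ^ 2 * (μ₂ * μ₃) ^ 2))
    (hb₀ : b₀ = 16 * π ^ 2 / ((n' : ℝ) * (ν₂ + ν₃) * (ν₂ * ν₃)))
    (hb₁ : b₁ = (b₀ / 3) * (ν₂ * ν₃))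
    (hb₃ : b₃ = (b₀ / 5040) * (184 * (ν₂ * ν₃) ^ 3
      - 48 * (ν₂ + ν₃) ^ 2 * (ν₂ * ν₃) ^ 2))
    (e₀ : a₀ = b₀) (e₁ : a₁ = b₁) (e₃ : a₃ = b₃) :
    n = n' ∧ ({μ₂, μ₃} : Multiset ℝ) = {ν₂, ν₃} := by
  have ha₀_ne : a₀ ≠ 0 := by rw [ha₀]; positivity
  have hP₂_ne : μ₂ * μ₃ ≠ 0 := by positivity
  have hP₂ : μ₂ * μ₃ = ν₂ * ν₃ :=
    mul_left_cancel₀ (div_ne_zero ha₀_ne three_ne_zero) (by rw [← ha₁, e₁, hb₁, e₀])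
  have hP₁_sq : (μ₂ + μ₃) ^ 2 = (ν₂ + ν₃) ^ 2 := by
    have h : 184 * (μ₂ * μ₃) ^ 3 - 48 * (μ₂ + μ₃) ^ 2 * (μ₂ * μ₃) ^ 2
        = 184 * (μ₂ * μ₃) ^ 3 - 48 * (ν₂ + ν₃) ^ 2 * (μ₂ * μ₃) ^ 2 :=
      mul_left_cancel₀ (div_ne_zero ha₀_ne (by norm_num : (5040 : ℝ) ≠ 0))
        (by rw [← ha₃, e₃, hb₃, e₀, hP₂])
    exact mul_right_cancel₀ (pow_ne_zero 2 hP₂_ne) (by linear_combination -h / 48)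
  have hP₁ : μ₂ + μ₃ = ν₂ + ν₃ := (sq_eq_sq₀ (by positivity) (by positivity)).mp hP₁_sq
  have hn_eq : (n : ℝ) = n' := by
    rw [ha₀, hb₀, ← hP₁, ← hP₂, div_eq_mul_inv, div_eq_mul_inv] at e₀
    have h := inv_injective (mul_left_cancel₀ (by positivity) e₀)
    exact mul_right_cancel₀ (by positivity : μ₂ + μ₃ ≠ 0) (mul_right_cancel₀ hP₂_ne h)
  exact ⟨Nat.cast_injective hn_eq, Multiset.pair_eq_pair_of_add_eq_of_mul_eq hP₁ hP₂⟩

/-- algebraic core of the lemma that isospectral locally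
homogeneous elliptic three-manifolds with degenerate Ricci tensor are locally
isometric and have fundamental groups of the same order.  Here the Christoffel
symbols are (0, μ₂, μ₃) with μ₂, μ₃ > 0, n = |Γ|, and a₀, a₁, a₂, a₃ are the
first four heat invariants. -/
theorem stmt_13 (n n' : ℕ) (hn : 0 < n) (hn' : 0 < n')
    (μ₂ μ₃ ν₂ ν₃ : ℝ)
    (hμ₂ : 0 < μ₂) (hμ₃ : 0 < μ₃) (hν₂ : 0 < ν₂) (hν₃ : 0 < ν₃)
    (a₀ a₁ a₂ a₃ b₀ b₁ b₂ b₃ : ℝ)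
    (ha₀ : a₀ = 16 * π ^ 2 / ((n : ℝ) * (μ₂ + μ₃) * (μ₂ * μ₃)))
    (ha₁ : a₁ = (a₀ / 3) * (μ₂ * μ₃))
    (ha₂ : a₂ = (a₀ / 10) * (μ₂ * μ₃) ^ 2)
    (ha₃ : a₃ = (a₀ / 5040) * (184 * (μ₂ * μ₃) ^ 3
      - 48 * (μ₂ + μ₃) ^ 2 * (μ₂ * μ₃) ^ 2))
    (hb₀ : b₀ = 16 * π ^ 2 / ((n' : ℝ) * (ν₂ + ν₃) * (ν₂ * ν₃)))
    (hb₁ : b₁ = (b₀ / 3) * (ν₂ * ν₃))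
    (hb₂ : b₂ = (b₀ / 10) * (ν₂ * ν₃) ^ 2)
    (hb₃ : b₃ = (b₀ / 5040) * (184 * (ν₂ * ν₃) ^ 3
      - 48 * (ν₂ + ν₃) ^ 2 * (ν₂ * ν₃) ^ 2))
    (e₀ : a₀ = b₀) (e₁ : a₁ = b₁) (e₂ : a₂ = b₂) (e₃ : a₃ = b₃) :
    n = n' ∧ ({μ₂, μ₃} : Multiset ℝ) = {ν₂, ν₃} :=
  stmt_13_general n n' hn μ₂ μ₃ ν₂ ν₃ hμ₂ hμ₃ hν₂ hν₃ a₀ a₁ a₃ b₀ b₁ b₃ ha₀ ha₁ ha₃ hb₀ hb₁ hb₃ e₀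
    e₁ e₃
end
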